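/- arXiv:2502.14852 — 3 statements merged into one kernel-verified Lean document; each statement's English description precedes it below -/
import Mathlib

section
/- Let (Q,I) be a connected gentle quiver in which every vertex is a transition vertex or a crossing vertex, and suppose some transition vertex j has AG-invariant (m(j), n(j)) with m(j) = n(j). Then every vertex of Q is a transition vertex; consequently no composable pair of arrows lies in I and Q is a single cyclically oriented cycle (every vertex has exactly one incoming and exactly one outgoing arrow). -/
/-- A gentle quiver `(Q, I)`: a finite quiver with arrow set `A`, vertex set `V`,
source and target maps `s, t`, and a set `I` of composable pairs of arrows
(`rel β α` means `βα ∈ I`, which requires `s β = t α`), subject to the gentleness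
conditions: every vertex has at most two incoming and at most two outgoing arrows,
and for every arrow there is at most one continuation (resp. precursor) with and
without relation. -/
structure GentleQuiver where
  /-- vertices -/
  V : Type
  /-- arrows -/
  A : Type
  fintypeV : Fintype V
  fintypeA : Fintype A
  /-- source of an arrow -/
  s : A → V
  /-- target of an arrow -/
  t : A → V
  /-- `rel β α` means that the composition `βα` lies in the ideal `I`. -/
  rel : A → A → Prop
  rel_comp : ∀ β α, rel β α → s β = t α
  at_most_two_in : ∀ (v : V) (α β γ : A), t α = v → t β = v → t γ = v → α = β ∨ α = γ ∨ β = γ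
  at_most_two_out : ∀ (v : V) (α β γ : A), s α = v → s β = v → s γ = v → α = β ∨ α = γ ∨ β = γ
  succ_nonrel_unique : ∀ α β β', s β = t α → s β' = t α → ¬ rel β α → ¬ rel β' α → β = β'
  succ_rel_unique : ∀ α β β', s β = t α → s β' = t α → rel β α → rel β' α → β = β'
  pred_nonrel_unique : ∀ α γ γ', t γ = s α → t γ' = s α → ¬ rel α γ → ¬ rel α γ' → γ = γ'
  pred_rel_unique : ∀ α γ γ', t γ = s α → t γ' = s α → rel α γ → rel α γ' → γ = γ'

attribute [instance] GentleQuiver.fintypeV GentleQuiver.fintypeA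

namespace GentleQuiver

variable (G : GentleQuiver)

/-- `b` may follow `a` in a permitted path: `s b = t a` and `ba ∉ I`. -/
def PStep (a b : G.A) : Prop := G.s b = G.t a ∧ ¬ G.rel b a

/-- `b` may follow `a` in a forbidden path: `s b = t a` and `ba ∈ I`. -/
def FStep (a b : G.A) : Prop := G.s b = G.t a ∧ G.rel b a

/-- A permitted path `α_n ⋯ α_1`, encoded as the list `[α_1, …, α_n]` of its arrows:
nonempty, with pairwise distinct arrows, consecutive arrows composable and with
`α_{i+1} α_i ∉ I`. -/
def IsPermPath (l : List G.A) : Prop := l ≠ [] ∧ l.Nodup ∧ l.Chain' G.PStep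

/-- A permitted cycle: a permitted path which closes up, with `α₁ α_n ∉ I`. -/
def IsPermCycle (l : List G.A) : Prop :=
  G.IsPermPath l ∧ ∀ a ∈ l.head?, ∀ b ∈ l.getLast?, G.PStep b a

/-- A permitted thread: a permitted path which is not a permitted cycle and cannot be
extended by any arrow on either side. -/
def IsPermThread (l : List G.A) : Prop :=
  G.IsPermPath l ∧ ¬ G.IsPermCycle l ∧
    (∀ b ∈ l.getLast?, ∀ c : G.A, ¬ G.PStep b c) ∧
    (∀ a ∈ l.head?, ∀ c : G.A, ¬ G.PStep c a)

/-- A forbidden path `β_n ⋯ β_1`, encoded as the list `[β_1, …, β_n]` of its arrows: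
nonempty, with pairwise distinct arrows, consecutive arrows composable and with
`β_{i+1} β_i ∈ I`. -/
def IsForbPath (l : List G.A) : Prop := l ≠ [] ∧ l.Nodup ∧ l.Chain' G.FStep

/-- A forbidden cycle: a forbidden path which closes up, with `β₁ β_n ∈ I`. -/
def IsForbCycle (l : List G.A) : Prop :=
  G.IsForbPath l ∧ ∀ a ∈ l.head?, ∀ b ∈ l.getLast?, G.FStep b a

/-- A forbidden thread: a forbidden path which is not a forbidden cycle and cannot be
extended by any arrow on either side. -/
def IsForbThread (l : List G.A) : Prop :=
  G.IsForbPath l ∧ ¬ G.IsForbCycle l ∧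
    (∀ b ∈ l.getLast?, ∀ c : G.A, ¬ G.FStep b c) ∧
    (∀ a ∈ l.head?, ∀ c : G.A, ¬ G.FStep c a)

/-- A transition vertex: exactly one incoming arrow `α`, exactly one outgoing arrow `β`,
and `βα ∉ I`. -/
def IsTransition (v : G.V) : Prop :=
  ∃ α β : G.A, G.t α = v ∧ G.s β = v ∧ (∀ α', G.t α' = v → α' = α) ∧
    (∀ β', G.s β' = v → β' = β) ∧ ¬ G.rel β α

/-- A crossing vertex: exactly two incoming arrows `α₁ ≠ α₂`, exactly two outgoing arrows
`β₁ ≠ β₂`, and (after reindexing) `β_j α_i ∈ I` iff `i = j`. -/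
def IsCrossing (v : G.V) : Prop :=
  ∃ α₁ α₂ β₁ β₂ : G.A, α₁ ≠ α₂ ∧ β₁ ≠ β₂ ∧
    G.t α₁ = v ∧ G.t α₂ = v ∧ G.s β₁ = v ∧ G.s β₂ = v ∧
    (∀ α, G.t α = v → α = α₁ ∨ α = α₂) ∧ (∀ β, G.s β = v → β = β₁ ∨ β = β₂) ∧
    G.rel β₁ α₁ ∧ G.rel β₂ α₂ ∧ ¬ G.rel β₁ α₂ ∧ ¬ G.rel β₂ α₁

/-- The path encoded by `l` starts at the vertex `v` (source of its first arrow). -/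
def StartsAt (l : List G.A) (v : G.V) : Prop := ∀ a ∈ l.head?, G.s a = v

/-- The path encoded by `l` ends at the vertex `v` (target of its last arrow). -/
def EndsAt (l : List G.A) (v : G.V) : Prop := ∀ b ∈ l.getLast?, G.t b = v

end GentleQuiver

/-!
Every transition vertex `v` is the source of a forbidden thread: a longest forbidden path
starting with the outgoing arrow of `v` cannot be extended, because in a gentle quiver an arrow
has at most one forbidden predecessor. A forbidden thread cannot end at a crossing vertex (it
would continue there), so `κ` maps transition vertices to transition vertices. Forbidden threads
are nonempty, so `m(j) = n(j)` forces every thread along the `κ`-orbit of `j` to be a single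
arrow, which must be the unique outgoing arrow of its source and the unique incoming arrow of its
target. Hence the orbit is closed under arrows in both directions and, by connectedness, contains
every vertex.
-/

namespace GentleQuiver

variable {G : GentleQuiver}

lemma IsTransition.not_rel {β α : G.A} (h : G.IsTransition (G.s β)) : ¬ G.rel β α := by
  obtain ⟨_, _, -, -, huα, huβ, hrel⟩ := h
  intro hβα
  rw [huα α (G.rel_comp β α hβα).symm, huβ β rfl] at hβα
  exact hrel hβα

lemma IsTransition.not_fStep {v : G.V} (hv : G.IsTransition v) {b : G.A} (hb : G.s b = v)
    (c : G.A) : ¬ G.FStep c b := by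
  subst hb
  exact fun hcb => hv.not_rel hcb.2

lemma IsCrossing.exists_fStep {w : G.V} (hw : G.IsCrossing w) {b : G.A} (hb : G.t b = w) :
    ∃ c, G.FStep b c := by
  obtain ⟨α₁, α₂, β₁, β₂, -, -, -, -, h₁, h₂, hin, -, r₁₁, r₂₂, -, -⟩ := hw
  rcases hin b hb with rfl | rfl
  · exact ⟨β₁, h₁.trans hb.symm, r₁₁⟩
  · exact ⟨β₂, h₂.trans hb.symm, r₂₂⟩

lemma FStep.left_unique {a b c : G.A} (hac : G.FStep a c) (hbc : G.FStep b c) : a = b :=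
  G.pred_rel_unique c a b hac.1.symm hbc.1.symm hac.2 hbc.2

lemma IsForbThread.ne_nil {l : List G.A} (hl : G.IsForbThread l) : l ≠ [] := hl.1.1

lemma IsForbThread.length_pos {l : List G.A} (hl : G.IsForbThread l) : 0 < l.length :=
  List.length_pos_iff.mpr hl.ne_nil

/-- Forbidden predecessors are unique, so if `c` were a non-head arrow of `l`, its predecessor in
`l` would be the last arrow `b`. -/
lemma IsForbPath.not_mem_of_fStep {l : List G.A} (hl : G.IsForbPath l)
    (hhead : ∀ a ∈ l.head?, ∀ c, ¬ G.FStep c a) {b c : G.A} (hb : b ∈ l.getLast?)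
    (hbc : G.FStep b c) : c ∉ l := by
  obtain ⟨hne, hnd, hch⟩ := hl
  have hpos : 0 < l.length := List.length_pos_iff.mpr hne
  have hb' : l[l.length - 1] = b := by
    rw [List.getLast?_eq_getElem?, List.getElem?_eq_getElem (by omega)] at hb
    exact Option.some_injective _ hb
  rintro hc
  obtain ⟨i, hi, rfl⟩ := List.mem_iff_getElem.mp hc
  cases i with
  | zero => exact hhead _ (by simp [List.head?_eq_getElem?, hpos]) b hbc
  | succ k =>
    have hpred : l[k] = l[l.length - 1] :=
      FStep.left_unique (List.isChain_iff_getElem.mp hch k hi) (hb' ▸ hbc)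
    have := (hnd.getElem_inj_iff).mp hpred
    omega

lemma IsForbPath.append_singleton {l : List G.A} (hl : G.IsForbPath l) {b c : G.A}
    (hb : b ∈ l.getLast?) (hbc : G.FStep b c) (hc : c ∉ l) : G.IsForbPath (l ++ [c]) := by
  obtain ⟨-, hnd, hch⟩ := hl
  refine ⟨by simp, List.nodup_append.mpr ⟨hnd, List.nodup_singleton c, ?_⟩, ?_⟩
  · simp only [List.mem_singleton]
    rintro x hx y rfl rfl
    exact hc hx
  · refine hch.append (List.isChain_singleton c) ?_
    simp only [List.head?_cons, Option.mem_some_iff]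
    rintro x hx y rfl
    rwa [Option.mem_unique hx hb]

lemma exists_isForbThread_startsAt {v : G.V} (hv : G.IsTransition v) :
    ∃ l, G.IsForbThread l ∧ G.StartsAt l v := by
  obtain ⟨_, β, -, hβ, -⟩ := id hv
  have hβ_start : ∀ c, ¬ G.FStep c β := hv.not_fStep hβ
  set S : Set (List G.A) := {l | G.IsForbPath l ∧ l.head? = some β}
  have hS_fin : S.Finite :=
    (List.finite_length_le G.A (Fintype.card G.A)).subset fun l hl => hl.1.2.1.length_le_card
  have hS_ne : S.Nonempty := ⟨[β], ⟨by simp, List.nodup_singleton β, List.isChain_singleton β⟩, rfl⟩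
  obtain ⟨l, ⟨hl, hhead⟩, hmax⟩ := S.exists_max_image List.length hS_fin hS_ne
  have hhead' : ∀ a ∈ l.head?, ∀ c, ¬ G.FStep c a := by
    simpa [hhead] using hβ_start
  have hlast : l.getLast hl.1 ∈ l.getLast? := List.getLast_mem_getLast? _
  have hend : ∀ b ∈ l.getLast?, ∀ c, ¬ G.FStep b c := by
    intro b hb c hbc
    have hext := hmax (l ++ [c])
      ⟨hl.append_singleton hb hbc (hl.not_mem_of_fStep hhead' hb hbc),
        by rw [List.head?_append_of_ne_nil _ hl.1, hhead]⟩
    simp at hext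
  refine ⟨l, ⟨hl, fun hcyc => ?_, hend, hhead'⟩, ?_⟩
  · exact hend _ hlast β (hcyc.2 β (by rw [hhead]; rfl) _ hlast)
  · simpa [StartsAt, hhead] using hβ

/-- At a crossing vertex a forbidden thread would continue. -/
lemma IsForbThread.isTransition_of_endsAt (hG : ∀ v : G.V, G.IsTransition v ∨ G.IsCrossing v)
    {l : List G.A} (hl : G.IsForbThread l) {w : G.V} (hw : G.EndsAt l w) : G.IsTransition w := by
  refine (hG w).resolve_right fun hcross => ?_
  have hlast : l.getLast hl.ne_nil ∈ l.getLast? := List.getLast_mem_getLast? _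
  obtain ⟨c, hc⟩ := hcross.exists_fStep (hw _ hlast)
  exact hl.2.2.1 _ hlast c hc

lemma IsTransition.isTransition_of_thread_endsAt
    (hG : ∀ v : G.V, G.IsTransition v ∨ G.IsCrossing v) {κ : G.V → G.V}
    (hκ : ∀ v : G.V, G.IsTransition v → ∀ l : List G.A,
      G.IsForbThread l → G.StartsAt l v → G.EndsAt l (κ v))
    {v : G.V} (hv : G.IsTransition v) : G.IsTransition (κ v) := by
  obtain ⟨l, hl, hstart⟩ := exists_isForbThread_startsAt hv
  exact hl.isTransition_of_endsAt hG (hκ v hv l hl hstart)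

lemma IsTransition.one_le_of_thread_length_eq {len : G.V → ℕ}
    (hlen : ∀ v : G.V, G.IsTransition v → ∀ l : List G.A,
      G.IsForbThread l → G.StartsAt l v → l.length = len v)
    {v : G.V} (hv : G.IsTransition v) : 1 ≤ len v := by
  obtain ⟨l, hl, hstart⟩ := exists_isForbThread_startsAt hv
  exact hlen v hv l hl hstart ▸ hl.length_pos

lemma IsTransition.exists_arrow_of_length_eq_one {κ : G.V → G.V}
    (hκ : ∀ v : G.V, G.IsTransition v → ∀ l : List G.A,
      G.IsForbThread l → G.StartsAt l v → G.EndsAt l (κ v))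
    {len : G.V → ℕ} (hlen : ∀ v : G.V, G.IsTransition v → ∀ l : List G.A,
      G.IsForbThread l → G.StartsAt l v → l.length = len v)
    {v : G.V} (hv : G.IsTransition v) (hv₁ : len v = 1) : ∃ b, G.s b = v ∧ G.t b = κ v := by
  obtain ⟨l, hl, hstart⟩ := exists_isForbThread_startsAt hv
  obtain ⟨b, rfl⟩ := List.length_eq_one_iff.mp ((hlen v hv l hl hstart).trans hv₁)
  exact ⟨b, hstart b rfl, hκ v hv _ hl hstart b rfl⟩

lemma forall_mem_of_arrow_closed
    (hconn : ∀ v w : G.V, Relation.ReflTransGen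
      (fun x y : G.V => ∃ α : G.A, (G.s α = x ∧ G.t α = y) ∨ (G.s α = y ∧ G.t α = x)) v w)
    {S : Set G.V} (hS : ∀ a, G.s a ∈ S ↔ G.t a ∈ S) {v₀ : G.V} (hv₀ : v₀ ∈ S) (v : G.V) :
    v ∈ S := by
  induction hconn v₀ v with
  | refl => exact hv₀
  | tail _ hxy ih =>
    obtain ⟨a, ⟨rfl, rfl⟩ | ⟨rfl, rfl⟩⟩ := hxy
    · exact (hS a).mp ih
    · exact (hS a).mpr ih

lemma arrow_closed_range {u : ℕ → G.V} (htrans : ∀ p, G.IsTransition (u p))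
    (harrow : ∀ p, ∃ b, G.s b = u p ∧ G.t b = u (p + 1)) (hpred : ∀ p, ∃ q, u (q + 1) = u p)
    (a : G.A) : G.s a ∈ Set.range u ↔ G.t a ∈ Set.range u := by
  constructor
  · rintro ⟨p, hp⟩
    obtain ⟨-, β, -, -, -, huβ, -⟩ := htrans p
    obtain ⟨b, hbs, hbt⟩ := harrow p
    exact ⟨p + 1, by rw [← hbt, huβ b hbs, huβ a hp.symm]⟩
  · rintro ⟨p, hp⟩
    obtain ⟨q, hq⟩ := hpred p
    obtain ⟨α, -, -, -, huα, -, -⟩ := htrans p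
    obtain ⟨b, hbs, hbt⟩ := harrow q
    exact ⟨q, by rw [← hbs, huα b (hbt.trans hq), huα a hp.symm]⟩

lemma IsTransition.existsUnique_target {v : G.V} (hv : G.IsTransition v) :
    ∃! α, G.t α = v := by
  obtain ⟨α, -, hα, -, huα, -, -⟩ := hv
  exact ⟨α, hα, huα⟩

lemma IsTransition.existsUnique_source {v : G.V} (hv : G.IsTransition v) :
    ∃! β, G.s β = v := by
  obtain ⟨-, β, -, hβ, -, huβ, -⟩ := hv
  exact ⟨β, hβ, huβ⟩

end GentleQuiver

open GentleQuiver in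
theorem stmt9_general (G : GentleQuiver)
    (hconn : ∀ v w : G.V, Relation.ReflTransGen
      (fun x y : G.V => ∃ α : G.A, (G.s α = x ∧ G.t α = y) ∨ (G.s α = y ∧ G.t α = x)) v w)
    (hG : ∀ v : G.V, G.IsTransition v ∨ G.IsCrossing v)
    (j : G.V) (hj : G.IsTransition j)
    (κ : G.V → G.V)
    (hκ : ∀ v : G.V, G.IsTransition v → ∀ l : List G.A,
      G.IsForbThread l → G.StartsAt l v → G.EndsAt l (κ v))
    (len : G.V → ℕ)
    (hlen : ∀ v : G.V, G.IsTransition v → ∀ l : List G.A,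
      G.IsForbThread l → G.StartsAt l v → l.length = len v)
    (n : ℕ) (hn : 0 < n) (hfix : κ^[n] j = j)
    (hm : ∑ p ∈ Finset.range n, len (κ^[p] j) = n) :
    (∀ v : G.V, G.IsTransition v) ∧
    (∀ β α : G.A, ¬ G.rel β α) ∧
    (∀ v : G.V, (∃! α : G.A, G.t α = v) ∧ (∃! β : G.A, G.s β = v)) := by
  have htrans : ∀ p, G.IsTransition (κ^[p] j) :=
    Function.Iterate.rec _ hj fun _ hv => hv.isTransition_of_thread_endsAt hG hκ
  have hlen_range : ∀ p ∈ Finset.range n, 1 = len (κ^[p] j) := by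
    refine (Finset.sum_eq_sum_iff_of_le fun p _ =>
      (htrans p).one_le_of_thread_length_eq hlen).mp ?_
    simp [hm]
  have hlen_one (p : ℕ) : len (κ^[p] j) = 1 := by
    rw [← Function.IsPeriodicPt.iterate_mod_apply hfix p]
    exact (hlen_range _ (Finset.mem_range.mpr (Nat.mod_lt p hn))).symm
  have harrow (p : ℕ) : ∃ b, G.s b = κ^[p] j ∧ G.t b = κ^[p + 1] j := by
    rw [Function.iterate_succ_apply']
    exact (htrans p).exists_arrow_of_length_eq_one hκ hlen (hlen_one p)
  have hpred (p : ℕ) : ∃ q, κ^[q + 1] j = κ^[p] j :=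
    ⟨p + n - 1, by rw [Nat.sub_add_cancel (by omega), Function.iterate_add_apply, hfix]⟩
  have hall (v : G.V) : G.IsTransition v := by
    obtain ⟨p, rfl⟩ := forall_mem_of_arrow_closed hconn (arrow_closed_range htrans harrow hpred)
      (Set.mem_range_self 0) v
    exact htrans p
  exact ⟨hall, fun _ _ => (hall _).not_rel,
    fun v => ⟨(hall v).existsUnique_target, (hall v).existsUnique_source⟩⟩

/-- let `(Q, I)` be a connected gentle quiver in which every vertex is a
transition or crossing vertex, and suppose some transition vertex `j` has AG-invariant
`(m(j), n(j))` with `m(j) = n(j)` (where `κ`, `len`, `n` are as in the definition of the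
AG-invariant and `m(j) = Σ_{p<n} len(κᵖ(j))`).  Then every vertex of `Q` is a transition
vertex; consequently no composable pair of arrows lies in `I`, and every vertex has
exactly one incoming and exactly one outgoing arrow (`Q` is a single oriented cycle). -/
theorem stmt9 (G : GentleQuiver)
    (hconn : ∀ v w : G.V, Relation.ReflTransGen
      (fun x y : G.V => ∃ α : G.A, (G.s α = x ∧ G.t α = y) ∨ (G.s α = y ∧ G.t α = x)) v w)
    (hG : ∀ v : G.V, G.IsTransition v ∨ G.IsCrossing v)
    (j : G.V) (hj : G.IsTransition j)
    (κ : G.V → G.V)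
    (hκ : ∀ v : G.V, G.IsTransition v → ∀ l : List G.A,
      G.IsForbThread l → G.StartsAt l v → G.EndsAt l (κ v))
    (len : G.V → ℕ)
    (hlen : ∀ v : G.V, G.IsTransition v → ∀ l : List G.A,
      G.IsForbThread l → G.StartsAt l v → l.length = len v)
    (n : ℕ) (hn : 0 < n) (hfix : κ^[n] j = j)
    (hmin : ∀ q : ℕ, 0 < q → κ^[q] j = j → n ≤ q)
    (hm : ∑ p ∈ Finset.range n, len (κ^[p] j) = n) :
    (∀ v : G.V, G.IsTransition v) ∧
    (∀ β α : G.A, ¬ G.rel β α) ∧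
    (∀ v : G.V, (∃! α : G.A, G.t α = v) ∧ (∃! β : G.A, G.s β = v)) :=
  stmt9_general G hconn hG j hj κ hκ len hlen n hn hfix hm
end

section
/- Let Γ = (V, E, μ) be a connected truncated graph with p vertices, incidence matrix B_Γ, and signless edge-based Laplacian A_Γ := B_Γ B_Γᵀ ∈ Mat_{E×E}(ℤ). Then the rank of A_Γ equals p − bc(Γ), where bc(Γ) ∈ {0,1} equals 1 if Γ is bipartite without truncated edges and 0 otherwise. -/
/-!
Over `ℚ` one has `rank (B Bᵀ) = rank B`, since `B Bᵀ` and `Bᵀ` have the same kernel by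
positivity, and the ranks over `ℤ` and `ℚ` agree because `ℚ` is a localization of `ℤ`. By
rank–nullity it remains to compute `ker B ⊆ ℚ^V`. A kernel vector `x` satisfies `x w = -x v`
along an ordinary edge `vw`, `2 x v = 0` at a loop and `x v = 0` at a truncated edge. In a
connected graph a nonzero kernel vector is therefore nowhere zero, spans the kernel, and its
sign is a `2`-coloring. So `ker B` is the line spanned by the `±1`-vector of a bipartition when
`Γ` is bipartite without truncated edges, and `0` otherwise.
-/

/-- A truncated graph `Γ = (V, E, μ)`: finite sets of vertices `V` and edges `E`
together with a multiplicity map `μ : E → V → ℕ` such that every edge has total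
multiplicity `1` (a truncated edge) or `2` (an ordinary edge or a loop). -/
structure TruncGraph (V E : Type) [Fintype V] where
  /-- multiplicity of a vertex in an edge -/
  μ : E → V → ℕ
  total_deg : ∀ e : E, (∑ v, μ e v) = 1 ∨ (∑ v, μ e v) = 2

namespace TruncGraph

variable {V E : Type} [Fintype V] [Fintype E] (Γ : TruncGraph V E)

/-- An edge `e` is incident to a vertex `v` if `μ e v ≠ 0`. -/
def Incid (e : E) (v : V) : Prop := Γ.μ e v ≠ 0

/-- A loop: an edge with multiplicity `2` at some vertex. -/
def IsLoop (e : E) : Prop := ∃ v : V, Γ.μ e v = 2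

/-- A truncated edge: total multiplicity `1`. -/
def IsTrunc (e : E) : Prop := (∑ v, Γ.μ e v) = 1

/-- An ordinary edge: neither a loop nor a truncated edge
(equivalently, incident to exactly two distinct vertices with multiplicity one each). -/
def IsOrd (e : E) : Prop := ¬ Γ.IsLoop e ∧ ¬ Γ.IsTrunc e

/-- Two vertices are adjacent if some edge is incident to both. -/
def Adj (v w : V) : Prop := ∃ e : E, Γ.Incid e v ∧ Γ.Incid e w

/-- Connectivity: the reflexive-transitive closure of adjacency. -/
def Conn (v w : V) : Prop := Relation.ReflTransGen Γ.Adj v w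

/-- `Γ` is connected. -/
def IsConnected : Prop := ∀ v w : V, Γ.Conn v w

/-- The edge `e` joins the vertices `a` and `b` (for a loop, `a = b`;
truncated edges join no pair of vertices). -/
def Joins (e : E) (a b : V) : Prop :=
  Γ.Incid e a ∧ Γ.Incid e b ∧ (a = b → Γ.μ e a = 2)

/-- `Γ` contains a cycle of odd length: a closed walk with an odd number of pairwise
distinct non-truncated edges (a loop counts as a cycle of length `1`). -/
def HasOddCycle : Prop :=
  ∃ ℓ : ℕ, Odd ℓ ∧ ∃ (v : ℕ → V) (e : ℕ → E), v 0 = v ℓ ∧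
    (∀ i j : ℕ, i < ℓ → j < ℓ → e i = e j → i = j) ∧
    ∀ i : ℕ, i < ℓ → Γ.Joins (e i) (v i) (v (i + 1))

/-- The edge-vertex incidence matrix `B_Γ ∈ Mat_{E×V}(ℤ)`. -/
def B : Matrix E V ℤ := fun e v => (Γ.μ e v : ℤ)

/-- Connectivity through ordinary edges only. -/
def ConnOrd (v w : V) : Prop :=
  Relation.ReflTransGen (fun x y : V => ∃ e : E, Γ.IsOrd e ∧ Γ.Incid e x ∧ Γ.Incid e y) v w

/-- `Γ` is a tree with a unique truncated edge: connected, no loops, exactly one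
truncated edge, and the ordinary edges form a tree on `V` (they connect `V` and number
`|V| − 1`); in particular `|E| = |V|`. -/
def IsTreeWithUniqueTruncEdge : Prop :=
  Γ.IsConnected ∧ (∀ e : E, ¬ Γ.IsLoop e) ∧ (∃! e : E, Γ.IsTrunc e) ∧
    (∀ v w : V, Γ.ConnOrd v w) ∧
    Nat.card {e : E // Γ.IsOrd e} + 1 = Fintype.card V

/-- `Γ` is a tree without truncated edges: connected, no loops, no truncated edges,
and `|E| = |V| − 1`. -/
def IsTreeNoTruncEdge : Prop :=
  Γ.IsConnected ∧ (∀ e : E, ¬ Γ.IsLoop e) ∧ (∀ e : E, ¬ Γ.IsTrunc e) ∧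
    Fintype.card E + 1 = Fintype.card V

/-- `Γ` is bipartite without truncated edges: it has no loops and no truncated edges,
and admits a `2`-coloring of its vertices such that every edge is incident to vertices
of both colors. -/
def IsBipartiteNoTrunc : Prop :=
  (∀ e : E, ¬ Γ.IsLoop e) ∧ (∀ e : E, ¬ Γ.IsTrunc e) ∧
    ∃ c : V → Bool, ∀ (e : E) (v w : V), Γ.Incid e v → Γ.Incid e w → v ≠ w → c v ≠ c w

/-- The component of `v` is bipartite without truncated edges: no loop or truncated edge
is incident to a vertex of the component of `v`, and there is a `2`-coloring of the
vertices such that every edge of the component joins vertices of different colors. -/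
def GoodCompAt (v : V) : Prop :=
  (∀ (e : E) (w : V), Γ.Conn v w → Γ.Incid e w → ¬ Γ.IsLoop e ∧ ¬ Γ.IsTrunc e) ∧
    ∃ c : V → Bool, ∀ (e : E) (w w' : V),
      Γ.Conn v w → Γ.Incid e w → Γ.Incid e w' → w ≠ w' → c w ≠ c w'

/-- `bc(Γ)`: the number of connected components of `Γ` which are bipartite without
truncated edges (components are realized as classes of the quotient of `V` by the
equivalence relation generated by adjacency). -/
noncomputable def bc : ℕ :=
  Set.ncard {q : Quot Γ.Adj | ∃ v : V, q = Quot.mk Γ.Adj v ∧ Γ.GoodCompAt v}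

end TruncGraph

open Matrix

theorem Nat.eq_zero_of_sum_le_sum_of_notMem {ι : Type*} [Fintype ι] {f : ι → ℕ}
    {s : Finset ι} (h : ∑ i, f i ≤ ∑ i ∈ s, f i) {i : ι} (hi : i ∉ s) : f i = 0 := by
  classical
  have hsplit := Finset.sum_sdiff (f := f) (Finset.subset_univ s)
  have hrest : ∑ j ∈ Finset.univ \ s, f j = 0 := by omega
  exact Finset.sum_eq_zero_iff.1 hrest i (by simpa using hi)

theorem Matrix.rank_add_finrank_ker {m n K : Type*} [Fintype n] [Field K] (A : Matrix m n K) :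
    A.rank + Module.finrank K (LinearMap.ker A.mulVecLin) = Fintype.card n := by
  rw [Matrix.rank, LinearMap.finrank_range_add_finrank_ker, Module.finrank_fintype_fun_eq_card]

noncomputable def piAlgebraMap (R K ι : Type*) [CommRing R] [CommRing K] [Algebra R K] :
    (ι → R) →ₗ[R] (ι → K) :=
  LinearMap.pi fun i => Algebra.linearMap R K ∘ₗ LinearMap.proj i

instance {R K ι : Type*} [CommRing R] [CommRing K] [Algebra R K] [Finite ι] (S : Submonoid R)
    [IsLocalization S K] : IsLocalizedModule S (piAlgebraMap R K ι) :=
  IsLocalizedModule.pi S fun _ => Algebra.linearMap R K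

/-- Localization commutes with taking the range of `A`, and does not change ranks. -/
theorem Matrix.rank_map_algebraMap_of_isLocalization {m n R K : Type*} [Fintype m] [Fintype n]
    [CommRing R] [CommRing K] [Algebra R K] (S : Submonoid R) (hS : S ≤ nonZeroDivisors R)
    [IsLocalization S K] (A : Matrix m n R) : (A.map (algebraMap R K)).rank = A.rank := by
  set f := piAlgebraMap R K n
  set g := piAlgebraMap R K m
  have hmap : (IsLocalizedModule.map S f g A.mulVecLin).extendScalarsOfIsLocalization S K =
      (A.map (algebraMap R K)).mulVecLin := by
    apply LinearMap.restrictScalars_injective R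
    refine IsLocalizedModule.ext S f (IsLocalizedModule.map_units g) ?_
    rw [LinearMap.restrictScalars_extendScalarsOfIsLocalization, IsLocalizedModule.map_comp]
    ext x i
    simp [f, g, piAlgebraMap, Matrix.mulVec, dotProduct]
  rw [Matrix.rank, Matrix.rank, ← hmap, ← LinearMap.localized'_range_eq_range_localizedMap K,
    IsLocalization.finrank_eq K S hS]
  exact IsLocalizedModule.finrank_eq S (Submodule.toLocalized' K S g _) hS

theorem Matrix.rank_self_mul_transpose_int {m n : Type*} [Fintype m] [Fintype n]
    (A : Matrix m n ℤ) : (A * Aᵀ).rank = A.rank := by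
  rw [← rank_map_algebraMap_of_isLocalization (K := ℚ) _ le_rfl,
    ← rank_map_algebraMap_of_isLocalization (K := ℚ) _ le_rfl A,
    Matrix.map_mul, transpose_map, rank_self_mul_transpose]

namespace TruncGraph

variable {V E : Type} [Fintype V] (Γ : TruncGraph V E)

section RowSums

variable {K : Type*} [Field K] (x : V → K) {e : E}

theorem sum_μ_le_two (e : E) : ∑ v, Γ.μ e v ≤ 2 := by
  rcases Γ.total_deg e with h | h <;> omega

theorem sum_μ_mul_eq_of_le {s : Finset V} (h : ∑ v, Γ.μ e v ≤ ∑ v ∈ s, Γ.μ e v) :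
    ∑ v, (Γ.μ e v : K) * x v = ∑ v ∈ s, (Γ.μ e v : K) * x v := by
  refine (Finset.sum_subset (Finset.subset_univ s) fun v _ hv => ?_).symm
  simp [Nat.eq_zero_of_sum_le_sum_of_notMem h hv]

theorem sum_μ_mul_of_incid_of_ne {v w : V} (hv : Γ.Incid e v) (hw : Γ.Incid e w)
    (hvw : v ≠ w) :
    ∑ u, (Γ.μ e u : K) * x u = x v + x w := by
  classical
  have hpair : ∑ u ∈ {v, w}, Γ.μ e u = Γ.μ e v + Γ.μ e w := Finset.sum_pair hvw
  have hle : ∑ u ∈ {v, w}, Γ.μ e u ≤ ∑ u, Γ.μ e u :=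
    Finset.sum_le_sum_of_subset (Finset.subset_univ _)
  have h2 := Γ.sum_μ_le_two e
  have hv1 : Γ.μ e v = 1 := by unfold Incid at hv hw; omega
  have hw1 : Γ.μ e w = 1 := by unfold Incid at hv hw; omega
  rw [Γ.sum_μ_mul_eq_of_le x (s := {v, w}) (by omega), Finset.sum_pair hvw, hv1, hw1]
  simp

theorem sum_μ_mul_of_loop {v : V} (hv : Γ.μ e v = 2) :
    ∑ u, (Γ.μ e u : K) * x u = 2 * x v := by
  rw [Γ.sum_μ_mul_eq_of_le x (s := {v}) (by simpa [hv] using Γ.sum_μ_le_two e),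
    Finset.sum_singleton, hv, Nat.cast_ofNat]

theorem exists_sum_μ_mul_of_isTrunc (he : Γ.IsTrunc e) :
    ∃ v, ∑ u, (Γ.μ e u : K) * x u = x v := by
  obtain ⟨v, -, hv⟩ := Finset.exists_ne_zero_of_sum_ne_zero (he.trans_ne one_ne_zero)
  have hle : Γ.μ e v ≤ 1 := he ▸ Finset.single_le_sum (fun _ _ => Nat.zero_le _)
    (Finset.mem_univ v)
  have hv1 : Γ.μ e v = 1 := by omega
  refine ⟨v, ?_⟩
  rw [Γ.sum_μ_mul_eq_of_le x (s := {v}) (by simp [hv1, he.le]), Finset.sum_singleton, hv1]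
  simp

theorem exists_incid_ne_of_isOrd (he : Γ.IsOrd e) :
    ∃ v w, Γ.Incid e v ∧ Γ.Incid e w ∧ v ≠ w := by
  obtain ⟨hloop, htrunc⟩ := he
  have h2 : ∑ u, Γ.μ e u = 2 := (Γ.total_deg e).resolve_left htrunc
  obtain ⟨v, -, hv⟩ := Finset.exists_ne_zero_of_sum_ne_zero (h2.trans_ne two_ne_zero)
  by_contra! hne
  have hsum : ∑ u, Γ.μ e u = Γ.μ e v :=
    Finset.sum_eq_single_of_mem v (Finset.mem_univ v) fun w _ hwv => by
      by_contra hw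
      exact hwv (hne w v hw hv)
  exact hloop ⟨v, hsum ▸ h2⟩

end RowSums

theorem B_map_mulVec_apply {K : Type*} [Field K] (x : V → K) (e : E) :
    (Γ.B.map (algebraMap ℤ K) *ᵥ x) e = ∑ v, (Γ.μ e v : K) * x v := by
  simp [mulVec, dotProduct, B]

section Kernel

variable {K : Type*} [Field K] {Γ} {x : V → K}

theorem eq_neg_of_mulVec_eq_zero (hx : Γ.B.map (algebraMap ℤ K) *ᵥ x = 0) {e : E} {v w : V}
    (hv : Γ.Incid e v) (hw : Γ.Incid e w) (hvw : v ≠ w) : x w = -x v := by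
  have h := congrFun hx e
  rw [B_map_mulVec_apply, sum_μ_mul_of_incid_of_ne Γ x hv hw hvw, Pi.zero_apply] at h
  linear_combination h

theorem eq_zero_of_conn (hx : Γ.B.map (algebraMap ℤ K) *ᵥ x = 0) {v w : V} (hvw : Γ.Conn v w)
    (hv : x v = 0) : x w = 0 := by
  induction hvw with
  | refl => exact hv
  | @tail a b _ hab ih =>
    obtain ⟨e, ha, hb⟩ := hab
    obtain rfl | hne := eq_or_ne a b
    · exact ih
    · rw [eq_neg_of_mulVec_eq_zero hx ha hb hne, ih, neg_zero]

theorem apply_ne_zero_of_mulVec_eq_zero (hconn : Γ.IsConnected)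
    (hx : Γ.B.map (algebraMap ℤ K) *ᵥ x = 0) (hx0 : x ≠ 0) (v : V) : x v ≠ 0 := by
  obtain ⟨w, hw⟩ := Function.ne_iff.1 hx0
  exact fun hv => hw (eq_zero_of_conn hx (hconn v w) hv)

theorem isBipartiteNoTrunc_of_mulVec_eq_zero [LinearOrder K] [IsStrictOrderedRing K]
    (hconn : Γ.IsConnected)
    (hx : Γ.B.map (algebraMap ℤ K) *ᵥ x = 0) (hx0 : x ≠ 0) : Γ.IsBipartiteNoTrunc := by
  have hne := apply_ne_zero_of_mulVec_eq_zero hconn hx hx0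
  have hrow (e : E) : ∑ u, (Γ.μ e u : K) * x u = 0 := by
    rw [← B_map_mulVec_apply, hx, Pi.zero_apply]
  refine ⟨fun e ⟨v, hv⟩ => ?_, fun e he => ?_, fun v => decide (0 < x v),
    fun e v w hv hw hvw => ?_⟩
  · have h := hrow e
    rw [Γ.sum_μ_mul_of_loop x hv] at h
    exact hne v (by linarith)
  · obtain ⟨v, hv⟩ := Γ.exists_sum_μ_mul_of_isTrunc x he
    exact hne v (hv ▸ hrow e)
  · have hxw := eq_neg_of_mulVec_eq_zero hx hv hw hvw
    rcases (hne v).lt_or_gt with h | h <;> simp [hxw, h, h.le]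

theorem ker_eq_span_of_mulVec_eq_zero (hconn : Γ.IsConnected)
    (hx : Γ.B.map (algebraMap ℤ K) *ᵥ x = 0) (hx0 : x ≠ 0) :
    LinearMap.ker (Γ.B.map (algebraMap ℤ K)).mulVecLin = K ∙ x := by
  obtain ⟨v₀, hv₀⟩ := Function.ne_iff.1 hx0
  refine le_antisymm (fun y hy => ?_) ((Submodule.span_singleton_le_iff_mem _ _).2 hx)
  rw [LinearMap.mem_ker, mulVecLin_apply] at hy
  set z := y - (y v₀ / x v₀) • x
  have hz : Γ.B.map (algebraMap ℤ K) *ᵥ z = 0 := by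
    rw [mulVec_sub, mulVec_smul, hx, hy, smul_zero, sub_zero]
  have hz₀ : z v₀ = 0 := by
    simp [z, div_mul_cancel₀ _ hv₀]
  have hz_eq : z = 0 := funext fun v => eq_zero_of_conn hz (hconn v₀ v) hz₀
  exact Submodule.mem_span_singleton.2 ⟨y v₀ / x v₀, (sub_eq_zero.1 hz_eq).symm⟩

theorem exists_mulVec_eq_zero_of_isBipartiteNoTrunc [Nonempty V] (hbip : Γ.IsBipartiteNoTrunc) :
    ∃ x : V → K, Γ.B.map (algebraMap ℤ K) *ᵥ x = 0 ∧ x ≠ 0 := by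
  obtain ⟨hloop, htrunc, c, hc⟩ := hbip
  refine ⟨fun v => if c v then 1 else -1, funext fun e => ?_, ?_⟩
  · obtain ⟨v, w, hv, hw, hvw⟩ := Γ.exists_incid_ne_of_isOrd ⟨hloop e, htrunc e⟩
    have hcvw := hc e v w hv hw hvw
    rw [B_map_mulVec_apply, Γ.sum_μ_mul_of_incid_of_ne _ hv hw hvw, Pi.zero_apply]
    cases hcv : c v <;> cases hcw : c w <;> simp_all
  · obtain ⟨v⟩ := ‹Nonempty V›
    refine Function.ne_iff.2 ⟨v, ?_⟩
    split_ifs <;> norm_num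

end Kernel

section Rank

variable {K : Type*} [Field K]

theorem rank_B_map_of_isBipartiteNoTrunc (hconn : Γ.IsConnected) (hbip : Γ.IsBipartiteNoTrunc) :
    (Γ.B.map (algebraMap ℤ K)).rank = Fintype.card V - 1 := by
  have hsum := (Γ.B.map (algebraMap ℤ K)).rank_add_finrank_ker
  rcases isEmpty_or_nonempty V with hV | hV
  · rw [Fintype.card_eq_zero] at hsum ⊢
    omega
  · obtain ⟨x, hx, hx0⟩ := exists_mulVec_eq_zero_of_isBipartiteNoTrunc (K := K) hbip
    rw [ker_eq_span_of_mulVec_eq_zero hconn hx hx0, finrank_span_singleton hx0] at hsum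
    omega

theorem rank_B_map_of_not_isBipartiteNoTrunc [LinearOrder K] [IsStrictOrderedRing K]
    (hconn : Γ.IsConnected) (hbip : ¬ Γ.IsBipartiteNoTrunc) :
    (Γ.B.map (algebraMap ℤ K)).rank = Fintype.card V := by
  have hker : LinearMap.ker (Γ.B.map (algebraMap ℤ K)).mulVecLin = ⊥ :=
    LinearMap.ker_eq_bot'.2 fun x hx =>
      by_contra fun hx0 => hbip (isBipartiteNoTrunc_of_mulVec_eq_zero hconn hx hx0)
  have hsum := (Γ.B.map (algebraMap ℤ K)).rank_add_finrank_ker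
  rwa [hker, finrank_bot, add_zero] at hsum

end Rank

end TruncGraph

theorem stmt13_general {V E : Type} [Fintype V] [Fintype E]
    (Γ : TruncGraph V E) (hconn : Γ.IsConnected) :
    (Γ.IsBipartiteNoTrunc → (Γ.B * Γ.B.transpose).rank = Fintype.card V - 1) ∧
      (¬ Γ.IsBipartiteNoTrunc → (Γ.B * Γ.B.transpose).rank = Fintype.card V) := by
  rw [Matrix.rank_self_mul_transpose_int,
    ← Matrix.rank_map_algebraMap_of_isLocalization (K := ℚ) _ le_rfl]
  exact ⟨Γ.rank_B_map_of_isBipartiteNoTrunc hconn,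
    Γ.rank_B_map_of_not_isBipartiteNoTrunc hconn⟩

/-- let `Γ` be a connected truncated graph with `p` vertices, incidence
matrix `B_Γ` and signless edge-based Laplacian `A_Γ = B_Γ B_Γᵀ`.  Then
`rank A_Γ = p − bc(Γ)`, where `bc(Γ) ∈ {0, 1}` is `1` if `Γ` is bipartite without
truncated edges and `0` otherwise. -/
theorem stmt13 {V E : Type} [Fintype V] [Fintype E] [DecidableEq V] [DecidableEq E]
    (Γ : TruncGraph V E) (hconn : Γ.IsConnected) :
    (Γ.IsBipartiteNoTrunc → (Γ.B * Γ.B.transpose).rank = Fintype.card V - 1) ∧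
      (¬ Γ.IsBipartiteNoTrunc → (Γ.B * Γ.B.transpose).rank = Fintype.card V) :=
  stmt13_general Γ hconn
end

section
/- Let (Q,I) be a gentle quiver in which every vertex is a transition vertex or a crossing vertex. Define permutations of the arrow set Q₁ as follows: σ(α) is the unique arrow with s(σ(α)) = t(α) and σ(α)α ∉ I; θ(α) is the unique arrow different from α with the same source as α if s(α) is a crossing vertex, and θ(α) = α if s(α) is a transition vertex; and set φ := θ ∘ σ. Let Q₁^{fc} be the set of arrows lying on forbidden cycles and, for β ∈ Q₁^{fc}, let ρ(β) be the unique arrow with s(ρ(β)) = t(β) and ρ(β)β ∈ I. Then: (a) φ(β) = ρ(β) for every β ∈ Q₁^{fc}, so Q₁^{fc} is φ-stable; (b) for every transition vertex j, the φ-orbit of the unique arrow α_j with s(α_j) = j consists exactly of the arrows of the AG-cycle c(j), and hence has cardinality m(j); (c) the assignment j ↦ (φ-orbit of α_j) induces a bijection between the set of κ-orbits of transition vertices and the set of φ-orbits contained in Q₁ ∖ Q₁^{fc}. -/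
namespace GentleQuiver

/-- The set `Q₁^{fc}` of arrows lying on a forbidden cycle. -/
def FcSet (G : GentleQuiver) : Set G.A := {β : G.A | ∃ l : List G.A, G.IsForbCycle l ∧ β ∈ l}

end GentleQuiver

/-!
Write `φ = θ ∘ σ`. It sends every arrow `a` to an arrow leaving `t a`, namely to the arrow `b`
with `ba ∈ I` when `t a` is a crossing vertex. Hence `φ` is a permutation, every forbidden path is
a stretch `a, φ a, …, φ^[ℓ-1] a` of a `φ`-orbit, and a forbidden thread is such a stretch from an
arrow leaving a transition vertex up to the first arrow ending at one. A `φ`-orbit that never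
meets a transition vertex is a forbidden cycle; every other orbit is cut by the arrows leaving
transition vertices into consecutive forbidden threads, and consecutive threads start at `v` and
`κ v`. Reading the orbit of `α_j` thread by thread gives (b), and since the first return of `φ` to
the arrows leaving transition vertices is conjugate to `κ`, the orbits correspond as in (c).
-/

section Orbits

open Function

variable {α : Type*}

theorem List.IsChain.eq_iterate {g : α → α} :
    ∀ {l : List α} {a : α}, l.IsChain (fun x y => g x = y) → a ∈ l.head? →
      l = List.iterate g a l.length
  | [], _, _, ha => by simp at ha
  | [x], a, _, ha => by simp_all
  | x :: y :: l, a, hl, ha => by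
    obtain ⟨rfl, hl⟩ := List.isChain_cons_cons.1 hl
    obtain rfl : x = a := by simpa using ha
    simpa using hl.eq_iterate (a := g x) (by simp)

theorem List.getLast?_iterate_succ (g : α → α) (a : α) (k : ℕ) :
    (List.iterate g a (k + 1)).getLast? = some (g^[k] a) := by
  rw [List.getLast?_eq_getElem?, List.length_iterate, Nat.add_sub_cancel,
    List.getElem?_iterate _ _ _ _ k.lt_succ_self]

theorem List.IsChain.mem_head?_of_forall_not_rel {R : α → α → Prop} {l : List α}
    (hl : l.IsChain R) {a : α} (ha : a ∈ l) (hpred : ∀ b, ¬ R b a) : a ∈ l.head? := by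
  obtain ⟨i, hi, rfl⟩ := List.mem_iff_getElem.1 ha
  cases i with
  | zero => simp [List.head?_eq_getElem?]
  | succ i => exact absurd (hl.getElem i hi) (hpred _)

section Cyclic

variable {R : α → α → Prop} {l : List α}

theorem List.IsChain.exists_succ_mem_of_cyclic (hl : l.IsChain R)
    (hwrap : ∀ a ∈ l.head?, ∀ b ∈ l.getLast?, R b a) {x : α} (hx : x ∈ l) :
    ∃ y ∈ l, R x y := by
  obtain ⟨i, hi, rfl⟩ := List.mem_iff_getElem.1 hx
  by_cases hi' : i + 1 < l.length
  · exact ⟨_, List.getElem_mem hi', hl.getElem i hi'⟩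
  · refine ⟨l[0], List.getElem_mem (by omega), hwrap _ (by simp [List.head?_eq_getElem?]) _ ?_⟩
    simp [List.getLast?_eq_getElem?, show i = l.length - 1 by omega]

theorem List.IsChain.exists_pred_mem_of_cyclic (hl : l.IsChain R)
    (hwrap : ∀ a ∈ l.head?, ∀ b ∈ l.getLast?, R b a) {x : α} (hx : x ∈ l) :
    ∃ y ∈ l, R y x := by
  simpa using (List.isChain_reverse.2 hl).exists_succ_mem_of_cyclic
    (fun a ha b hb => hwrap b (by simpa using hb) a (by simpa using ha)) (List.mem_reverse.2 hx)

end Cyclic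

theorem Function.exists_iterate_eq_of_mem_periodicPts {f : α → α} {x : α}
    (hx : x ∈ periodicPts f) (k : ℕ) : ∃ m, f^[m] (f^[k] x) = x := by
  obtain ⟨n, hn, hper⟩ := hx
  refine ⟨n * k - k, ?_⟩
  rw [← iterate_add_apply, Nat.sub_add_cancel (Nat.le_mul_of_pos_left k hn)]
  exact (hper.mul_const k).eq

theorem Function.minimalPeriod_eq_of_notMem_tail_iterate {g : α → α} {a : α} {N : ℕ}
    (hN : 0 < N) (hper : g^[N] a = a) (hfirst : a ∉ (List.iterate g a N).tail) :
    minimalPeriod g a = N := by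
  have hperiodic : IsPeriodicPt g N a := hper
  refine (hperiodic.minimalPeriod_le hN).antisymm (not_lt.1 fun hlt => hfirst ?_)
  obtain ⟨M, rfl⟩ : ∃ M, N = M + 1 := ⟨N - 1, by omega⟩
  have hpos := hperiodic.minimalPeriod_pos hN
  refine List.mem_iterate.2 ⟨minimalPeriod g a - 1, by omega, ?_⟩
  rw [← iterate_succ_apply, Nat.succ_eq_add_one, Nat.sub_add_cancel hpos, iterate_minimalPeriod]

theorem Function.iterate_orbit_of_notMem_tail {g : α → α} {a : α} {N : ℕ}
    (hN : 0 < N) (hper : g^[N] a = a) (hfirst : a ∉ (List.iterate g a N).tail) :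
    (∀ x, (∃ k, g^[k] a = x) ↔ x ∈ List.iterate g a N) ∧
      {x | ∃ k, g^[k] a = x}.ncard = N := by
  classical
  have hmin := minimalPeriod_eq_of_notMem_tail_iterate hN hper hfirst
  have hmem : ∀ x, (∃ k, g^[k] a = x) ↔ x ∈ List.iterate g a N := by
    intro x
    rw [List.mem_iterate]
    constructor
    · rintro ⟨k, rfl⟩
      exact ⟨k % N, Nat.mod_lt _ hN, by rw [← hmin, iterate_mod_minimalPeriod_eq]⟩
    · rintro ⟨m, -, rfl⟩
      exact ⟨m, rfl⟩
  have hnodup : (List.iterate g a N).Nodup := by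
    rw [← List.range_map_iterate]
    refine (List.nodup_range).map_on fun i hi j hj hij => ?_
    rw [List.mem_range, ← hmin] at hi hj
    exact iterate_injOn_Iio_minimalPeriod hi hj hij
  refine ⟨hmem, ?_⟩
  have : {x | ∃ k, g^[k] a = x} = ↑(List.iterate g a N).toFinset := by
    ext x; simp only [Set.mem_ofPred_eq, hmem, Finset.mem_coe, List.mem_toFinset]
  rw [this, Set.ncard_coe_finset, List.toFinset_card_of_nodup hnodup, List.length_iterate]

end Orbits

section OrbitQuotient

open Function

variable {V Z : Type*} {q : V → Prop} {p : Z → Prop} {κ : V → V} {φ : Z → Z}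

theorem quot_mk_eq_of_iterate_eq (hp : ∀ z, p z → p (φ z)) {a b : {z // p z}} {k : ℕ}
    (h : φ^[k] a.1 = b.1) :
    Quot.mk (fun a b : {z // p z} => φ a.1 = b.1) a = Quot.mk _ b := by
  induction k generalizing a with
  | zero => rw [Subtype.ext h]
  | succ k ih =>
    exact (Quot.sound (r := fun a b : {z // p z} => φ a.1 = b.1) (b := ⟨φ a.1, hp _ a.2⟩)
      rfl).trans (ih h)

theorem exists_iterate_eq_of_quot_mk_eq [Finite Z] (hφ : Injective φ) {a b : {z // p z}}
    (h : Quot.mk (fun a b : {z // p z} => φ a.1 = b.1) a = Quot.mk _ b) :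
    ∃ k, φ^[k] a.1 = b.1 := by
  have horbit : Equivalence fun a b : {z // p z} => ∃ k, φ^[k] a.1 = b.1 :=
    { refl := fun a => ⟨0, rfl⟩
      symm := fun {a _} ⟨k, hk⟩ =>
        hk ▸ exists_iterate_eq_of_mem_periodicPts (hφ.mem_periodicPts a.1) k
      trans := fun ⟨k, hk⟩ ⟨m, hm⟩ => ⟨m + k, by rw [iterate_add_apply, hk, hm]⟩ }
  exact horbit.eqvGen_iff.1 <|
    (Quot.eqvGen_exact h).mono fun a b hab => ⟨1, hab⟩

theorem exists_bijective_quot_of_returnTime [Finite Z] (hφ : Injective φ)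
    (hp : ∀ z, p z → p (φ z)) (hq : ∀ v, q v → q (κ v)) (e : {v // q v} → {z // p z})
    (ℓ : {v // q v} → ℕ) (hℓ : ∀ v, 0 < ℓ v)
    (hreturn : ∀ v, φ^[ℓ v] (e v).1 = (e ⟨κ v.1, hq _ v.2⟩).1)
    (hhit : ∀ v w i, i < ℓ v → φ^[i] (e v).1 = (e w).1 → v = w)
    (hcover : ∀ z : {z // p z}, ∃ v k, φ^[k] (e v).1 = z.1) :
    ∃ F : Quot (fun v w : {v // q v} => κ v.1 = w.1) →
        Quot (fun a b : {z // p z} => φ a.1 = b.1),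
      Bijective F ∧ ∀ v, F (Quot.mk _ v) = Quot.mk _ (e v) := by
  refine ⟨Quot.lift (fun v => Quot.mk _ (e v)) fun v w hvw => ?_, ⟨?_, ?_⟩, fun v => rfl⟩
  · obtain rfl : w = ⟨κ v.1, hq _ v.2⟩ := Subtype.ext hvw.symm
    exact quot_mk_eq_of_iterate_eq hp (hreturn v)
  · -- along the forward orbit of `e v`, the points `e u` are met exactly at the return times
    have hreach : ∀ v k, ∃ u i, i < ℓ u ∧ φ^[k] (e v).1 = φ^[i] (e u).1 ∧
        Quot.mk (fun v w : {v // q v} => κ v.1 = w.1) v = Quot.mk _ u := by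
      intro v k
      induction k with
      | zero => exact ⟨v, 0, hℓ v, rfl, rfl⟩
      | succ k ih =>
        obtain ⟨u, i, hi, hk, hu⟩ := ih
        rw [iterate_succ_apply', hk, ← iterate_succ_apply' φ]
        by_cases hi' : i + 1 < ℓ u
        · exact ⟨u, i + 1, hi', rfl, hu⟩
        · refine ⟨⟨κ u.1, hq _ u.2⟩, 0, hℓ _, ?_, hu.trans (Quot.sound rfl)⟩
          rw [Nat.succ_eq_add_one, show i + 1 = ℓ u by omega, hreturn]
          rfl
    rintro ⟨v⟩ ⟨w⟩ h
    obtain ⟨k, hk⟩ := exists_iterate_eq_of_quot_mk_eq hφ h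
    obtain ⟨u, i, hi, hki, hu⟩ := hreach v k
    rw [hu, hhit u w i hi (hki ▸ hk)]
  · rintro ⟨z⟩
    obtain ⟨v, k, hk⟩ := hcover z
    exact ⟨Quot.mk _ v, quot_mk_eq_of_iterate_eq hp hk⟩

end OrbitQuotient

namespace GentleQuiver

variable {G : GentleQuiver}

theorem IsTransition.eq_of_s_eq {v : G.V} (hv : G.IsTransition v) {a b : G.A}
    (ha : G.s a = v) (hb : G.s b = v) : a = b := by
  obtain ⟨-, β, -, -, -, hout, -⟩ := hv
  rw [hout a ha, hout b hb]

theorem IsTransition.eq_of_t_eq {v : G.V} (hv : G.IsTransition v) {a b : G.A}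
    (ha : G.t a = v) (hb : G.t b = v) : a = b := by
  obtain ⟨α, -, -, -, hin, -, -⟩ := hv
  rw [hin a ha, hin b hb]

theorem not_fStep_of_isTransition {a b : G.A} (hb : G.IsTransition (G.s b)) :
    ¬ G.FStep a b := by
  rintro ⟨hab, hrel⟩
  obtain ⟨α, β, -, -, hin, hout, hnrel⟩ := hb
  rw [hin a hab.symm, hout b rfl] at hrel
  exact hnrel hrel

theorem not_fStep_of_isTransition_t {a b : G.A} (ha : G.IsTransition (G.t a)) :
    ¬ G.FStep a b := fun hab => not_fStep_of_isTransition (hab.1 ▸ ha) hab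

theorem IsCrossing.exists_fStep_s16 {a : G.A} (ha : G.IsCrossing (G.t a)) : ∃ b, G.FStep a b := by
  obtain ⟨α₁, α₂, β₁, β₂, -, -, -, -, hs₁, hs₂, hin, -, h₁, h₂, -, -⟩ := ha
  rcases hin a rfl with rfl | rfl
  exacts [⟨β₁, hs₁, h₁⟩, ⟨β₂, hs₂, h₂⟩]

theorem IsForbCycle.exists_succ_mem {l : List G.A} (hl : G.IsForbCycle l) {a : G.A}
    (ha : a ∈ l) : ∃ b ∈ l, G.FStep a b :=
  hl.1.2.2.exists_succ_mem_of_cyclic hl.2 ha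

theorem IsForbCycle.exists_pred_mem {l : List G.A} (hl : G.IsForbCycle l) {a : G.A}
    (ha : a ∈ l) : ∃ b ∈ l, G.FStep b a :=
  hl.1.2.2.exists_pred_mem_of_cyclic hl.2 ha

theorem IsForbPath.mem_head?_of_isTransition {l : List G.A} (hl : G.IsForbPath l) {a : G.A}
    (ha : a ∈ l) (hsa : G.IsTransition (G.s a)) : a ∈ l.head? :=
  hl.2.2.mem_head?_of_forall_not_rel ha fun _ => not_fStep_of_isTransition hsa

theorem not_mem_fcSet_of_isTransition {a : G.A} (ha : G.IsTransition (G.s a)) :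
    a ∉ G.FcSet := fun ⟨_, hl, hal⟩ =>
  let ⟨_, _, hba⟩ := hl.exists_pred_mem hal
  not_fStep_of_isTransition ha hba

theorem IsForbThread.isTransition_t (hG : ∀ v, G.IsTransition v ∨ G.IsCrossing v)
    {l : List G.A} (hl : G.IsForbThread l) {b : G.A} (hb : b ∈ l.getLast?) :
    G.IsTransition (G.t b) :=
  (hG _).resolve_right fun hcross =>
    let ⟨c, hbc⟩ := hcross.exists_fStep_s16
    hl.2.2.1 b hb c hbc

def IsThreadTarget (G : GentleQuiver) (κ : G.V → G.V) : Prop :=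
  ∀ v, G.IsTransition v → ∀ l, G.IsForbThread l → G.StartsAt l v → G.EndsAt l (κ v)

/-- When every vertex is a transition or a crossing vertex, these two properties determine
`φ = θ ∘ σ`: at a crossing vertex `φ a` is the arrow `b` with `ba ∈ I`, at a transition vertex
it is the only outgoing arrow. -/
structure IsFaceMap (G : GentleQuiver) (φ : G.A → G.A) : Prop where
  s_apply : ∀ a, G.s (φ a) = G.t a
  apply_eq_of_fStep : ∀ {a b}, G.FStep a b → φ a = b

namespace IsFaceMap

open Function

variable {φ : G.A → G.A} (hφ : G.IsFaceMap φ)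
include hφ

theorem fStep_apply (hG : ∀ v, G.IsTransition v ∨ G.IsCrossing v) {a : G.A}
    (ha : ¬ G.IsTransition (G.t a)) : G.FStep a (φ a) := by
  obtain ⟨b, hab⟩ := ((hG _).resolve_left ha).exists_fStep_s16
  rwa [hφ.apply_eq_of_fStep hab]

theorem injective (hG : ∀ v, G.IsTransition v ∨ G.IsCrossing v) : Injective φ := by
  intro a b hab
  have ht : G.t a = G.t b := by rw [← hφ.s_apply, hab, hφ.s_apply]
  by_cases htr : G.IsTransition (G.t a)
  · exact htr.eq_of_t_eq rfl ht.symm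
  · have ha := hφ.fStep_apply hG htr
    have hb := hφ.fStep_apply hG (ht ▸ htr)
    rw [hab] at ha
    exact G.pred_rel_unique _ a b ha.1.symm hb.1.symm ha.2 hb.2

theorem apply_mem_fcSet {a : G.A} (ha : a ∈ G.FcSet) : φ a ∈ G.FcSet :=
  let ⟨l, hl, hal⟩ := ha
  let ⟨_, hbl, hab⟩ := hl.exists_succ_mem hal
  ⟨l, hl, hφ.apply_eq_of_fStep hab ▸ hbl⟩

theorem s_iterate_length {l : List G.A} (hl : G.IsForbPath l) {a b : G.A} (ha : a ∈ l.head?)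
    (hb : b ∈ l.getLast?) : G.s (φ^[l.length] a) = G.t b := by
  obtain ⟨n, hn⟩ : ∃ n, l.length = n + 1 := Nat.exists_eq_succ_of_ne_zero (by simp [hl.1])
  have hiter := hl.2.2.imp (fun _ _ => hφ.apply_eq_of_fStep) |>.eq_iterate ha
  rw [hn] at hiter
  subst hiter
  rw [List.getLast?_iterate_succ, Option.mem_some_iff] at hb
  rw [List.length_iterate, iterate_succ_apply', hφ.s_apply, hb]

variable (hG : ∀ v, G.IsTransition v ∨ G.IsCrossing v)
include hG

theorem isForbPath_iterate {a : G.A} {n : ℕ} (hn : 0 < n) (hle : n ≤ minimalPeriod φ a)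
    (hstep : ∀ i, i + 1 < n → ¬ G.IsTransition (G.t (φ^[i] a))) :
    G.IsForbPath (List.iterate φ a n) := by
  refine ⟨by simp; omega, ?_, List.isChain_iff_getElem.2 fun i hi => ?_⟩
  · rw [← List.range_map_iterate]
    refine List.nodup_range.map_on fun i hi j hj hij => ?_
    rw [List.mem_range] at hi hj
    exact iterate_injOn_Iio_minimalPeriod (hi.trans_le hle) (hj.trans_le hle) hij
  · simp only [List.getElem_iterate, iterate_succ_apply']
    exact hφ.fStep_apply hG (hstep i (by simpa using hi))

theorem exists_isForbThread_iterate {a : G.A} (ha : G.IsTransition (G.s a)) :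
    ∃ ℓ, 0 < ℓ ∧ G.IsForbThread (List.iterate φ a ℓ) := by
  classical
  have hper := minimalPeriod_pos_of_mem_periodicPts ((hφ.injective hG).mem_periodicPts a)
  have hend : G.IsTransition (G.t (φ^[minimalPeriod φ a - 1] a)) := by
    rwa [← hφ.s_apply, ← iterate_succ_apply' φ, Nat.succ_eq_add_one, Nat.sub_add_cancel hper,
      iterate_minimalPeriod]
  have hex : ∃ k, G.IsTransition (G.t (φ^[k] a)) := ⟨_, hend⟩
  have hle : Nat.find hex < minimalPeriod φ a := by
    have := Nat.find_min' hex hend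
    omega
  have hlast := List.getLast?_iterate_succ φ a (Nat.find hex)
  refine ⟨Nat.find hex + 1, by omega, ?_, ?_, ?_, ?_⟩
  · exact hφ.isForbPath_iterate hG (by omega) hle fun i hi => Nat.find_min hex (by omega)
  · exact fun hcycle => not_fStep_of_isTransition ha (hcycle.2 a (by simp) _ hlast)
  · intro b hb c
    obtain rfl : b = _ := Option.some_inj.1 (hb.symm.trans hlast)
    exact not_fStep_of_isTransition_t (Nat.find_spec hex)
  · intro b hb c
    obtain rfl : b = a := by simpa using hb.symm
    exact not_fStep_of_isTransition ha

theorem mem_fcSet_of_apply_mem {a : G.A} (ha : φ a ∈ G.FcSet) : a ∈ G.FcSet :=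
  let ⟨l, hl, hal⟩ := ha
  let ⟨_, hbl, hba⟩ := hl.exists_pred_mem hal
  ⟨l, hl, hφ.injective hG (hφ.apply_eq_of_fStep hba) ▸ hbl⟩

theorem exists_isTransition_iterate_eq {x : G.A} (hx : x ∉ G.FcSet) :
    ∃ a k, G.IsTransition (G.s a) ∧ φ^[k] a = x := by
  have hperiodic := (hφ.injective hG).mem_periodicPts x
  by_contra! hno
  -- otherwise the orbit of `x` never passes through a transition vertex: it is a forbidden cycle
  have hcross : ∀ i, ¬ G.IsTransition (G.t (φ^[i] x)) := fun i htr => by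
    obtain ⟨k, hk⟩ := exists_iterate_eq_of_mem_periodicPts hperiodic (i + 1)
    exact hno _ k (by rwa [iterate_succ_apply', hφ.s_apply]) hk
  have hpos := minimalPeriod_pos_of_mem_periodicPts hperiodic
  obtain ⟨n, hn⟩ : ∃ n, minimalPeriod φ x = n + 1 := ⟨_, (Nat.succ_pred_eq_of_pos hpos).symm⟩
  refine hx ⟨List.iterate φ x (n + 1), ⟨hφ.isForbPath_iterate hG (by omega) hn.ge
    fun i _ => hcross i, fun a ha b hb => ?_⟩, by simp⟩
  obtain rfl : a = x := by simpa using ha.symm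
  obtain rfl : b = φ^[n] a := Option.some_inj.1 (hb.symm.trans (List.getLast?_iterate_succ ..))
  have := hφ.fStep_apply hG (hcross n)
  rwa [← iterate_succ_apply' φ, Nat.succ_eq_add_one, ← hn, iterate_minimalPeriod] at this

variable {κ : G.V → G.V} (hκ : G.IsThreadTarget κ)
include hκ

theorem isTransition_and_s_iterate_length {v : G.V} (hv : G.IsTransition v) {l : List G.A}
    (hl : G.IsForbThread l) (hlv : G.StartsAt l v) {a : G.A} (ha : a ∈ l.head?) :
    G.IsTransition (κ v) ∧ G.s (φ^[l.length] a) = κ v := by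
  obtain ⟨b, hb⟩ := Option.ne_none_iff_exists'.1 (List.getLast?_eq_none_iff.not.2 hl.1.1)
  have hend := hκ v hv l hl hlv b hb
  exact ⟨hend ▸ hl.isTransition_t hG hb, (hφ.s_iterate_length hl.1 ha hb).trans hend⟩

theorem flatMap_range_eq_iterate {j : G.V} (hj : G.IsTransition j) {αj : G.A}
    (hαj : G.s αj = j) (f : ℕ → List G.A) (n : ℕ)
    (hf : ∀ p < n, G.IsForbThread (f p) ∧ G.StartsAt (f p) (κ^[p] j)) :
    (List.range n).flatMap f = List.iterate φ αj (∑ p ∈ Finset.range n, (f p).length) ∧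
      G.IsTransition (κ^[n] j) ∧
      G.s (φ^[∑ p ∈ Finset.range n, (f p).length] αj) = κ^[n] j := by
  induction n with
  | zero => simpa using ⟨hj, hαj⟩
  | succ n ih =>
    obtain ⟨hL, hjn, hsn⟩ := ih fun p hp => hf p (by omega)
    obtain ⟨hthread, hstart⟩ := hf n (by omega)
    obtain ⟨b, hb⟩ := Option.ne_none_iff_exists'.1 (List.head?_eq_none_iff.not.2 hthread.1.1)
    obtain rfl := hjn.eq_of_s_eq (hstart b hb) hsn
    have hfn := hthread.1.2.2.imp (fun _ _ => hφ.apply_eq_of_fStep) |>.eq_iterate hb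
    obtain ⟨hjn', hsn'⟩ := hφ.isTransition_and_s_iterate_length hG hκ hjn hthread hstart hb
    rw [iterate_succ_apply', Finset.sum_range_succ, List.range_succ, List.flatMap_append,
      List.iterate_add, ← hL, ← hfn, add_comm, iterate_add_apply]
    exact ⟨by simp, hjn', hsn'⟩

theorem orbit_eq_flatMap_range {j : G.V} (hj : G.IsTransition j) {αj : G.A}
    (hαj : G.s αj = j) {n : ℕ} (hn : 0 < n) (hκn : κ^[n] j = j)
    (hmin : ∀ q, 0 < q → κ^[q] j = j → n ≤ q) (f : ℕ → List G.A)
    (hf : ∀ p < n, G.IsForbThread (f p) ∧ G.StartsAt (f p) (κ^[p] j)) :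
    (∀ x, (∃ k, φ^[k] αj = x) ↔ x ∈ (List.range n).flatMap f) ∧
      {x | ∃ k, φ^[k] αj = x}.ncard = ∑ p ∈ Finset.range n, (f p).length := by
  obtain ⟨hL, -, hs⟩ := hφ.flatMap_range_eq_iterate hG hκ hj hαj f n hf
  have hper : φ^[∑ p ∈ Finset.range n, (f p).length] αj = αj :=
    hj.eq_of_s_eq (hs.trans hκn) hαj
  -- `αj` can only be the first arrow of a thread, and `f 0` is the only thread starting at `j`
  have hstart : ∀ p < n, αj ∈ f p → αj ∈ (f p).head? ∧ p = 0 := fun p hp hmem => by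
    have hhead := (hf p hp).1.1.mem_head?_of_isTransition hmem (hαj ▸ hj)
    refine ⟨hhead, Nat.eq_zero_of_not_pos fun hp0 => ?_⟩
    exact (hmin p hp0 ((hf p hp).2 αj hhead ▸ hαj)).not_gt hp
  have hfirst : αj ∉ ((List.range n).flatMap f).tail := by
    obtain ⟨m, rfl⟩ : ∃ m, n = m + 1 := ⟨n - 1, by omega⟩
    rw [List.range_succ_eq_map, List.flatMap_cons,
      List.tail_append_of_ne_nil (hf 0 hn).1.1.1, List.mem_append, List.mem_flatMap]
    rintro (htail | ⟨p, hp, hmem⟩)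
    · obtain ⟨hhead, -⟩ := hstart 0 hn (List.mem_of_mem_tail htail)
      have hnodup := (hf 0 hn).1.1.2.1
      rw [← List.cons_head?_tail hhead] at hnodup
      exact (List.nodup_cons.1 hnodup).1 htail
    · obtain ⟨p, hp, rfl⟩ := List.mem_map.1 hp
      exact Nat.succ_ne_zero p (hstart _ (by simpa using hp) hmem).2
  have hpos : 0 < ∑ p ∈ Finset.range n, (f p).length :=
    (List.length_pos_of_ne_nil (hf 0 hn).1.1.1).trans_le
      (Finset.single_le_sum (f := fun p => (f p).length) (fun _ _ => Nat.zero_le _)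
        (Finset.mem_range.2 hn))
  rw [hL] at hfirst ⊢
  exact iterate_orbit_of_notMem_tail hpos hper hfirst

theorem exists_bijective_quot_transition :
    ∃ F : Quot (fun v w : {v : G.V // G.IsTransition v} => κ v.1 = w.1) →
        Quot (fun a b : {x : G.A // x ∉ G.FcSet} => φ a.1 = b.1),
      Bijective F ∧ ∀ (j : {v : G.V // G.IsTransition v}) (a : {x : G.A // x ∉ G.FcSet}),
        G.s a.1 = j.1 → F (Quot.mk _ j) = Quot.mk _ a := by
  have hout (v : {v : G.V // G.IsTransition v}) :
      ∃ a : {x : G.A // x ∉ G.FcSet}, G.s a.1 = v.1 :=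
    let ⟨_, β, _, hsβ, _⟩ := v.2
    ⟨⟨β, not_mem_fcSet_of_isTransition (hsβ ▸ v.2)⟩, hsβ⟩
  choose e he using hout
  have hthread (v : {v : G.V // G.IsTransition v}) :=
    hφ.exists_isForbThread_iterate hG ((he v).symm ▸ v.2)
  choose ℓ hℓ hthread using hthread
  have hhead (v) : (e v).1 ∈ (List.iterate φ (e v).1 (ℓ v)).head? := by
    obtain ⟨m, hm⟩ := Nat.exists_eq_succ_of_ne_zero (hℓ v).ne'
    simp [hm]
  have hκv (v) : G.IsTransition (κ v.1) ∧ G.s (φ^[ℓ v] (e v).1) = κ v.1 := by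
    simpa using hφ.isTransition_and_s_iterate_length hG hκ v.2 (hthread v)
      (fun a ha => Option.some_inj.1 (ha.symm.trans (hhead v)) ▸ he v) (hhead v)
  have hq (v) (hv : G.IsTransition v) : G.IsTransition (κ v) := (hκv ⟨v, hv⟩).1
  obtain ⟨F, hF, hFe⟩ := exists_bijective_quot_of_returnTime (hφ.injective hG)
    (fun _ hz hφz => hz (hφ.mem_fcSet_of_apply_mem hG hφz)) hq e ℓ hℓ
    (fun v => (hq _ v.2).eq_of_s_eq (hκv v).2 (he _))
    (fun v w i hi hvw => by
      have hmem : (e w).1 ∈ List.iterate φ (e v).1 (ℓ v) := List.mem_iterate.2 ⟨i, hi, hvw.symm⟩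
      have := Option.some_inj.1 <|
        ((hthread v).1.mem_head?_of_isTransition hmem ((he w).symm ▸ w.2)).symm.trans (hhead v)
      exact Subtype.ext (by rw [← he v, ← he w, this]))
    (fun z => by
      obtain ⟨a, k, ha, hk⟩ := hφ.exists_isTransition_iterate_eq hG z.2
      exact ⟨⟨G.s a, ha⟩, k, by rwa [ha.eq_of_s_eq (he ⟨G.s a, ha⟩) rfl]⟩)
  refine ⟨F, hF, fun j a ha => ?_⟩
  rw [hFe, show e j = a from Subtype.ext (j.2.eq_of_s_eq (he j) ha)]

end IsFaceMap

theorem isFaceMap_comp (hG : ∀ v, G.IsTransition v ∨ G.IsCrossing v) {σ θ : G.A → G.A}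
    (hσ : ∀ α : G.A, G.s (σ α) = G.t α ∧ ¬ G.rel (σ α) α)
    (hθt : ∀ α : G.A, G.IsTransition (G.s α) → θ α = α)
    (hθc : ∀ α : G.A, G.IsCrossing (G.s α) → θ α ≠ α ∧ G.s (θ α) = G.s α) :
    G.IsFaceMap (θ ∘ σ) where
  s_apply a := by
    rw [Function.comp_apply, ← (hσ a).1]
    rcases hG (G.s (σ a)) with htr | hcr
    · rw [hθt _ htr]
    · exact (hθc _ hcr).2
  apply_eq_of_fStep {a b} hab := by
    obtain ⟨hsσ, hnrel⟩ := hσ a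
    have hcr : G.IsCrossing (G.s (σ a)) :=
      (hG _).resolve_left fun htr => not_fStep_of_isTransition_t (hsσ ▸ htr) hab
    obtain ⟨hθne, hθs⟩ := hθc _ hcr
    rcases G.at_most_two_out (G.t a) (σ a) b (θ (σ a)) hsσ hab.1 (hθs.trans hsσ) with h | h | h
    · exact absurd (h ▸ hab.2) hnrel
    · exact absurd h.symm hθne
    · exact h.symm

end GentleQuiver

/-- let `(Q, I)` be a gentle quiver in which every vertex is a transition
or crossing vertex.  Let `σ` send each arrow to its unique successor without relation,
let `θ` fix arrows starting at transition vertices and swap the two arrows with common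
source at crossing vertices, and set `φ := θ ∘ σ`.  Let `ρ` send each arrow `β` on a
forbidden cycle to the unique arrow with `s(ρβ) = t(β)` and `ρ(β)β ∈ I`, and let `κ` be
the permutation of transition vertices induced by forbidden threads.  Then:
(a) `φ(β) = ρ(β)` for every `β ∈ Q₁^{fc}`, so `Q₁^{fc}` is `φ`-stable;
(b) for every transition vertex `j` with unique outgoing arrow `α_j`, and every `n ≥ 1`
minimal with `κⁿ(j) = j` and every choice of forbidden threads `f p` starting at
`κᵖ(j)`, the `φ`-orbit of `α_j` consists exactly of the arrows of the AG-cycle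
`c(j) = f_{n} ⋯ f_1` and has cardinality `m(j) = Σ_{p<n} length (f p)`;
(c) `j ↦ (φ`-orbit of `α_j)` induces a bijection between the set of `κ`-orbits of
transition vertices and the set of `φ`-orbits contained in `Q₁ ∖ Q₁^{fc}`. -/
theorem stmt16 (G : GentleQuiver) (hG : ∀ v : G.V, G.IsTransition v ∨ G.IsCrossing v)
    (σ : G.A → G.A) (hσ : ∀ α : G.A, G.s (σ α) = G.t α ∧ ¬ G.rel (σ α) α)
    (θ : G.A → G.A)
    (hθt : ∀ α : G.A, G.IsTransition (G.s α) → θ α = α)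
    (hθc : ∀ α : G.A, G.IsCrossing (G.s α) → θ α ≠ α ∧ G.s (θ α) = G.s α)
    (ρ : G.A → G.A)
    (hρ : ∀ β ∈ G.FcSet, G.s (ρ β) = G.t β ∧ G.rel (ρ β) β)
    (κ : G.V → G.V)
    (hκ : ∀ v : G.V, G.IsTransition v → ∀ l : List G.A,
      G.IsForbThread l → G.StartsAt l v → G.EndsAt l (κ v)) :
    -- (a)
    (∀ β ∈ G.FcSet, (θ ∘ σ) β = ρ β ∧ (θ ∘ σ) β ∈ G.FcSet) ∧
    -- (b)
    (∀ j : G.V, G.IsTransition j → ∀ αj : G.A, G.s αj = j →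
      ∀ n : ℕ, 0 < n → κ^[n] j = j → (∀ q : ℕ, 0 < q → κ^[q] j = j → n ≤ q) →
      ∀ f : ℕ → List G.A,
        (∀ p : ℕ, p < n → G.IsForbThread (f p) ∧ G.StartsAt (f p) (κ^[p] j)) →
        (∀ x : G.A, (∃ k : ℕ, (θ ∘ σ)^[k] αj = x) ↔ x ∈ (List.range n).flatMap f) ∧
        Set.ncard {x : G.A | ∃ k : ℕ, (θ ∘ σ)^[k] αj = x} =
          ∑ p ∈ Finset.range n, (f p).length) ∧
    -- (c)
    (∃ F : Quot (fun v w : {v : G.V // G.IsTransition v} => κ v.1 = w.1) →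
        Quot (fun a b : {x : G.A // x ∉ G.FcSet} => (θ ∘ σ) a.1 = b.1),
      Function.Bijective F ∧
      ∀ (j : {v : G.V // G.IsTransition v}) (a : {x : G.A // x ∉ G.FcSet}),
        G.s a.1 = j.1 → F (Quot.mk _ j) = Quot.mk _ a) := by
  have hφ := GentleQuiver.isFaceMap_comp hG hσ hθt hθc
  exact ⟨fun β hβ => ⟨hφ.apply_eq_of_fStep (hρ β hβ), hφ.apply_mem_fcSet hβ⟩,
    fun _ hj _ hαj _ hn hκn hmin f hf => hφ.orbit_eq_flatMap_range hG hκ hj hαj hn hκn hmin f hf,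
    hφ.exists_bijective_quot_transition hG hκ⟩
end
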